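/- Let $A$ be an integral domain with quotient field $Q$, and let $\mathcal{Z} \subseteq \prod_{x\in\mathcal{V}} A$ be the structure algebra of a moment graph with nonzero edge labels $\alpha_E \in A \setminus \{0\}$. Then $\mathcal{Z} \otimes_A Q \cong \prod_{x\in\mathcal{V}} Q$, i.e., the $Q$-span of $\mathcal{Z}$ inside $\prod_{x\in\mathcal{V}} Q$ is all of $\prod_{x\in\mathcal{V}} Q$. -/
import Mathlib


/-- For a moment graph over an integral domain `A` with finite vertex set and
nonzero edge labels, the `Q`-span of the structure algebra `𝒵` inside
`∏_{x ∈ 𝒱} Q` is everything, i.e. `𝒵 ⊗_A Q ≅ ∏_{x ∈ 𝒱} Q`. -/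
theorem structure_algebra_span_eq_top
    (V : Type) [Finite V] (A : Type) [CommRing A] [IsDomain A]
    (Edges : Finset (V × V)) (α : V × V → A) (hα : ∀ e ∈ Edges, α e ≠ 0) :
    Submodule.span (FractionRing A)
      ((fun z : V → A => fun x => algebraMap A (FractionRing A) (z x)) ''
        {z : V → A | ∀ e ∈ Edges, α e ∣ z e.1 - z e.2}) =
      (⊤ : Submodule (FractionRing A) (V → FractionRing A)) := by
  classical
  have : Fintype V := Fintype.ofFinite V
  set Q := FractionRing A
  set c : A := ∏ e ∈ Edges, α e with hc_def
  have hc : c ≠ 0 := Finset.prod_ne_zero_iff.2 hα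
  have hc' : (algebraMap A Q) c ≠ 0 := by
    simpa using (map_ne_zero_iff _ (IsFractionRing.injective A Q)).2 hc
  rw [eq_top_iff]
  intro v _
  have key : ∀ x : V, Pi.single x (v x) ∈ Submodule.span Q
      ((fun z : V → A => fun x => algebraMap A Q (z x)) ''
        {z : V → A | ∀ e ∈ Edges, α e ∣ z e.1 - z e.2}) := by
    intro x
    set z : V → A := fun y => if y = x then c else 0 with hz
    have hzmem : z ∈ {z : V → A | ∀ e ∈ Edges, α e ∣ z e.1 - z e.2} := by
      intro e he
      have hdvd : α e ∣ c := Finset.dvd_prod_of_mem α he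
      simp only [hz]
      by_cases h1 : e.1 = x <;> by_cases h2 : e.2 = x <;>
        simp [h1, h2, hdvd, hdvd.neg_right]
    have hfmem : (fun y => algebraMap A Q (z y)) ∈ Submodule.span Q
        ((fun z : V → A => fun x => algebraMap A Q (z x)) ''
          {z : V → A | ∀ e ∈ Edges, α e ∣ z e.1 - z e.2}) :=
      Submodule.subset_span ⟨z, hzmem, rfl⟩
    have : Pi.single x (v x) =
        (v x / algebraMap A Q c) • fun y => algebraMap A Q (z y) := by
      funext y
      by_cases h : y = x
      · subst h
        simp [hz, div_mul_cancel₀ _ hc']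
      · simp [hz, h, Pi.single_eq_of_ne h]
    rw [this]
    exact Submodule.smul_mem _ _ hfmem
  have hv : v = ∑ x : V, Pi.single x (v x) := by
    funext y; simp
  rw [hv]
  exact Submodule.sum_mem _ fun x _ => key x
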